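/- If 𝒢 is a crossed group operad (i.e., the structure morphism π: 𝒢 → 𝒮 is not trivial on all levels), then π: G_n → S_n is surjective for every n. -/

import Mathlib

/-- Distributing a sigma type over a sum index. -/
def sumSigmaDistrib {α β : Type*} (P : α ⊕ β → Type*) :
    (Σ s, P s) ≃ (Σ a, P (Sum.inl a)) ⊕ (Σ b, P (Sum.inr b)) where
  toFun p :=
    match p with
    | ⟨Sum.inl a, x⟩ => Sum.inl ⟨a, x⟩
    | ⟨Sum.inr b, x⟩ => Sum.inr ⟨b, x⟩
  invFun q :=
    match q with
    | Sum.inl ⟨a, x⟩ => ⟨Sum.inl a, x⟩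
    | Sum.inr ⟨b, x⟩ => ⟨Sum.inr b, x⟩
  left_inv p := by rcases p with ⟨a | b, x⟩ <;> rfl
  right_inv q := by rcases q with ⟨a, x⟩ | ⟨b, x⟩ <;> rfl

/-- A sigma type over `Fin 1` is just its unique fiber. -/
def sigmaFin1 (Q : Fin 1 → Type*) : (Σ b : Fin 1, Q b) ≃ Q 0 where
  toFun p := Fin.cases (motive := fun b => Q b → Q 0) id (fun i => i.elim0) p.1 p.2
  invFun x := ⟨0, x⟩
  left_inv := by rintro ⟨b, x⟩; fin_cases b; rfl
  right_inv x := rfl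

/-- The order-preserving equivalence `(Σ i : Fin k, Fin (m i)) ≃ Fin (∑ i, m i)`. -/
def finSigmaEquiv : ∀ (k : ℕ) (m : Fin k → ℕ), (Σ i : Fin k, Fin (m i)) ≃ Fin (∑ i, m i)
  | 0, m => (Equiv.equivOfIsEmpty _ (Fin 0)).trans (finCongr (by simp))
  | k+1, m =>
      ((Equiv.sigmaCongrLeft (β := fun i => Fin (m i)) (finSumFinEquiv (m := k) (n := 1))).symm.trans
        ((sumSigmaDistrib _).trans
          ((Equiv.sumCongr (finSigmaEquiv k fun a => m (finSumFinEquiv (Sum.inl a)))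
              (sigmaFin1 _)).trans
            (finSumFinEquiv.trans (finCongr (by
              rw [Fin.sum_univ_castSucc]
              congr 1))))))

/-- Block composition of permutations: `k` blocks of sizes `m 0, …, m (k-1)` are permuted
according to `σ` and the `i`-th block is permuted internally by `τ i`.  This is the operadic
composition of the symmetric groups operad `𝒮`. -/
def blockComp {k : ℕ} {m : Fin k → ℕ} (σ : Equiv.Perm (Fin k))
    (τ : (i : Fin k) → Equiv.Perm (Fin (m i))) : Equiv.Perm (Fin (∑ i, m i)) :=
  let e₂ : (Σ i : Fin k, Fin (m i)) ≃ Σ j : Fin k, Fin (m (σ.symm j)) :=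
    Equiv.sigmaCongr σ fun i => (τ i).trans (finCongr (congrArg m (σ.symm_apply_apply i).symm))
  ((finSigmaEquiv k m).symm.trans e₂).trans
    ((finSigmaEquiv k fun j => m (σ.symm j)).trans (finCongr (Equiv.sum_comp σ.symm m)))

/-- A group operad: an operad `𝒢 = {G n}` of groups together with a morphism `π` to the
symmetric groups operad, such that the identity of `G 1` is the operadic unit and the
operadic composition `γ` is a crossed homomorphism. -/
structure GroupOperad (G : ℕ → Type) [∀ n, Group (G n)] where
  π : ∀ n, G n →* Equiv.Perm (Fin n)
  γ : ∀ {k : ℕ} {m : Fin k → ℕ}, G k → ((i : Fin k) → G (m i)) → G (∑ i, m i)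
  one_γ : ∀ {n : ℕ} (b : G n), γ (1 : G 1) (fun _ : Fin 1 => b) = cast (congrArg G (by simp)) b
  γ_one : ∀ {k : ℕ} (a : G k), γ a (fun _ : Fin k => (1 : G 1)) = cast (congrArg G (by simp)) a
  crossed : ∀ {k : ℕ} {m : Fin k → ℕ} (a a' : G k) (b b' : (i : Fin k) → G (m i)),
      γ (a * a') (fun i => b i * b' i) =
        γ a b *
          cast (congrArg G (Equiv.sum_comp (π k a).symm m))
            (γ a' fun i => b' ((π k a).symm i))
  π_γ : ∀ {k : ℕ} {m : Fin k → ℕ} (a : G k) (b : (i : Fin k) → G (m i)),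
      π (∑ i, m i) (γ a b) = blockComp (π k a) fun i => π (m i) (b i)

/-! The images `π (G n)` form a sub group operad of `𝒮`, so it suffices that a sub group operad
`H` of `𝒮` with some `H N ≠ ⊥` is everything. A permutation `σ ≠ 1` has an inversion
`i < j`, `σ j < σ i`; composing `σ` with blocks of size one at `i` and `j` and empty blocks
elsewhere gives the transposition of `S₂`. Composing the identity of `Sₙ` with that transposition
in block `i` and blocks of size one elsewhere gives the adjacent transposition `(i i+1)` of
`Sₙ₊₁`, and these generate `Sₙ₊₁`. -/

theorem sumSigmaDistrib_eq {α β : Type*} (P : α ⊕ β → Type*) :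
    sumSigmaDistrib P = Equiv.sumSigmaDistrib P := by
  ext ⟨a | b, x⟩ <;> rfl

theorem sigmaFin1_eq (Q : Fin 1 → Type*) : sigmaFin1 Q = Equiv.uniqueSigma Q := by
  ext ⟨b, x⟩
  fin_cases b
  rfl

theorem finSigmaEquiv_eq_finSigmaFinEquiv :
    ∀ (k : ℕ) (m : Fin k → ℕ), finSigmaEquiv k m = finSigmaFinEquiv
  | 0, _ => Subsingleton.elim _ _
  | k + 1, m => by
    rw [finSigmaEquiv, finSigmaFinEquiv, finSigmaEquiv_eq_finSigmaFinEquiv k, sumSigmaDistrib_eq,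
      sigmaFin1_eq]
    rfl

theorem blockComp_finSigmaFinEquiv_val {k : ℕ} {m : Fin k → ℕ} (σ : Equiv.Perm (Fin k))
    (τ : (i : Fin k) → Equiv.Perm (Fin (m i))) (i : Fin k) (y : Fin (m i)) :
    (blockComp σ τ (finSigmaFinEquiv ⟨i, y⟩) : ℕ) =
      ∑ j : Fin (σ i), m (σ.symm (Fin.castLE (σ i).isLt.le j)) + τ i y := by
  simp only [blockComp, finSigmaEquiv_eq_finSigmaFinEquiv, Equiv.trans_apply,
    Equiv.symm_apply_apply, finCongr_apply, Fin.val_cast, finSigmaFinEquiv_apply]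
  rfl

theorem blockComp_one {k : ℕ} {m : Fin k → ℕ} (τ : (i : Fin k) → Equiv.Perm (Fin (m i))) :
    blockComp 1 τ = finSigmaFinEquiv.permCongr (Equiv.sigmaCongrRight τ) := by
  ext x
  obtain ⟨⟨i, y⟩, rfl⟩ := finSigmaFinEquiv.surjective x
  simp only [blockComp_finSigmaFinEquiv_val, Equiv.Perm.coe_one, id_eq, Equiv.permCongr_apply,
    Equiv.symm_apply_apply, Equiv.sigmaCongrRight_apply, finSigmaFinEquiv_apply]
  rfl

theorem Equiv.Perm.exists_lt_and_apply_lt {α : Type*} [LinearOrder α] [Finite α]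
    {σ : Equiv.Perm α} (hσ : σ ≠ 1) : ∃ i j, i < j ∧ σ j < σ i := by
  by_contra! h
  have hmono : StrictMono σ := fun i j hij => (h i j hij).lt_of_ne (σ.injective.ne hij.ne)
  exact hσ (Equiv.ext fun x => hmono.apply_eq)

/-- The sub group operads of the symmetric groups operad `𝒮`. -/
def IsBlockClosed (H : ∀ n, Subgroup (Equiv.Perm (Fin n))) : Prop :=
  ∀ {k : ℕ} {m : Fin k → ℕ} (σ : Equiv.Perm (Fin k)) (τ : (i : Fin k) → Equiv.Perm (Fin (m i))),
    σ ∈ H k → (∀ i, τ i ∈ H (m i)) → blockComp σ τ ∈ H (∑ i, m i)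

namespace IsBlockClosed

variable {H : ∀ n, Subgroup (Equiv.Perm (Fin n))}

theorem two_eq_top (hH : IsBlockClosed H) {N : ℕ} (hN : H N ≠ ⊥) : H 2 = ⊤ := by
  obtain ⟨⟨σ, hσH⟩, hσ⟩ := Subgroup.ne_bot_iff_exists_ne_one.mp hN
  obtain ⟨i, j, hij, hσij⟩ := Equiv.Perm.exists_lt_and_apply_lt (σ := σ) (by simpa using hσ)
  set m : Fin N → ℕ := Pi.single i 1 + Pi.single j 1
  have hsum : ∑ l, m l = 2 := by simp [m, Finset.sum_add_distrib]
  have hmi : 0 < m i := by simp [m]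
  have hmj : 0 < m j := by simp [m]
  have hbefore : ∀ l : Fin i, m (Fin.castLE i.isLt.le l) = 0 := fun l => by
    have hl : Fin.castLE i.isLt.le l < i := l.isLt
    simp [m, hl.ne, (hl.trans hij).ne]
  -- Block `i` starts at position `0`, but `σ` moves block `j` in front of it.
  set x : Fin (∑ l, m l) := finSigmaFinEquiv ⟨i, ⟨0, hmi⟩⟩
  have hx : (x : ℕ) = 0 := by simp [x, hbefore]
  have hσx : 1 ≤ (blockComp σ (fun l => (1 : Equiv.Perm (Fin (m l)))) x : ℕ) := by
    rw [blockComp_finSigmaFinEquiv_val]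
    calc 1 ≤ m j := hmj
      _ = m (σ.symm (Fin.castLE (σ i).isLt.le ⟨σ j, hσij⟩)) := by simp
      _ ≤ ∑ l : Fin (σ i), m (σ.symm (Fin.castLE (σ i).isLt.le l)) :=
        Finset.single_le_sum (f := fun l : Fin (σ i) => m (σ.symm (Fin.castLE (σ i).isLt.le l)))
          (fun _ _ => Nat.zero_le _) (Finset.mem_univ _)
      _ ≤ _ := Nat.le_add_right _ _
  have hne : blockComp σ (fun l => (1 : Equiv.Perm (Fin (m l)))) ≠ 1 := fun h => by
    rw [h, Equiv.Perm.one_apply] at hσx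
    omega
  have hmem : H (∑ l, m l) ≠ ⊥ := Subgroup.ne_bot_iff_exists_ne_one.mpr
    ⟨⟨_, hH σ _ hσH fun _ => one_mem _⟩, by simpa using hne⟩
  rw [hsum] at hmem
  have : Fact (Nat.card (Equiv.Perm (Fin 2))).Prime :=
    ⟨by rw [Nat.card_perm, Nat.card_fin, Nat.factorial_two]; exact Nat.prime_two⟩
  exact (H 2).eq_bot_or_eq_top_of_prime_card.resolve_left hmem

theorem swap_castSucc_succ_mem (hH : IsBlockClosed H) (h2 : H 2 = ⊤) {n : ℕ} (i : Fin n) :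
    Equiv.swap i.castSucc i.succ ∈ H (n + 1) := by
  set m : Fin n → ℕ := 1 + Pi.single i 1
  have hmi : m i = 2 := by simp [m]
  have hsum : ∑ l, m l = n + 1 := by simp [m, Finset.sum_add_distrib, add_comm]
  have hbefore : ∀ l : Fin i, m (Fin.castLE i.isLt.le l) = 1 := fun l => by
    simp [m, (show Fin.castLE i.isLt.le l < i from l.isLt).ne]
  let p : Fin (m i) := ⟨0, by omega⟩
  let q : Fin (m i) := ⟨1, by omega⟩
  set τ : (l : Fin n) → Equiv.Perm (Fin (m l)) := Function.update 1 i (Equiv.swap p q)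
  have hτ : ∀ l, τ l ∈ H (m l) := by
    intro l
    rcases eq_or_ne l i with rfl | hl
    · exact (show H (m l) = ⊤ from hmi ▸ h2) ▸ Subgroup.mem_top _
    · simp [τ, hl, one_mem]
  have hswap : Equiv.sigmaCongrRight τ = Equiv.swap ⟨i, p⟩ ⟨i, q⟩ := by
    ext ⟨l, y⟩ : 1
    rcases eq_or_ne l i with rfl | hl
    · simp [τ, sigma_mk_injective.swap_apply]
    · rw [Equiv.swap_apply_of_ne_of_ne (by simp [hl]) (by simp [hl])]
      simp [τ, hl]
  have hmem := hH 1 τ (one_mem _) hτ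
  rw [blockComp_one, hswap, Equiv.permCongr_def, Equiv.symm_trans_swap_trans] at hmem
  have htransport : ∀ c (hc : ∑ l, m l = c),
      Equiv.swap (finCongr hc (finSigmaFinEquiv ⟨i, p⟩)) (finCongr hc (finSigmaFinEquiv ⟨i, q⟩))
        ∈ H c := by
    rintro c rfl
    simpa using hmem
  convert htransport (n + 1) hsum using 2 <;> ext <;> simp [hbefore, p, q]

theorem eq_top (hH : IsBlockClosed H) {N : ℕ} (hN : H N ≠ ⊥) (n : ℕ) : H n = ⊤ := by
  cases n with
  | zero => exact Subsingleton.elim _ _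
  | succ n =>
    rw [eq_top_iff, ← Subgroup.closure_eq_top_of_mclosure_eq_top
      (Equiv.Perm.mclosure_swap_castSucc_succ n), Subgroup.closure_le]
    rintro _ ⟨i, rfl⟩
    exact hH.swap_castSucc_succ_mem (hH.two_eq_top hN) i

end IsBlockClosed

theorem GroupOperad.isBlockClosed_range {G : ℕ → Type} [∀ n, Group (G n)] (P : GroupOperad G) :
    IsBlockClosed fun n => (P.π n).range := by
  rintro k m _ τ ⟨a, rfl⟩ hτ
  choose b hb using hτ
  exact ⟨P.γ a b, by rw [P.π_γ, funext hb]⟩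

/-- If `𝒢` is a crossed group operad (the structure morphism `π : 𝒢 → 𝒮` is not trivial on all
levels), then `π : G n → S n` is surjective for every `n`. -/
theorem groupOperad_crossed_pi_surjective (G : ℕ → Type) [∀ n, Group (G n)]
    (P : GroupOperad G) (hcrossed : ¬ ∀ (n : ℕ) (g : G n), P.π n g = 1) :
    ∀ n : ℕ, Function.Surjective (P.π n) := by
  simp only [not_forall] at hcrossed
  obtain ⟨N, g, hg⟩ := hcrossed
  have hN : (P.π N).range ≠ ⊥ :=
    Subgroup.ne_bot_iff_exists_ne_one.mpr ⟨⟨_, g, rfl⟩, mt (congrArg Subtype.val) hg⟩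
  exact fun n => MonoidHom.range_eq_top.mp (IsBlockClosed.eq_top P.isBlockClosed_range hN n)
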